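/- arXiv:2605.00657 — 2 statements merged into one kernel-verified Lean document; each statement's English description precedes it below -/
import Mathlib

section
/- Let a ≥ 2 be an integer and p ∈ (0,1) with q = 1 − p. For every ν ∈ {1,…,a−1} and every z ∈ {1,…,a−1}, the spectral coefficient B_ν satisfies the harmonic-type relation p·B_ν(z+1) + q·B_ν(z−1) = λ_ν·B_ν(z), where B_ν(w) = (2/a)·(p/q)^{(a−w)/2}·sin(πν(a−w)/a)·sin(πν/a) for any integer w ∈ {0,…,a} and λ_ν = 2·√(p·q)·cos(πν/a). (Note B_ν(0) = B_ν(a) = 0.) -/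
/-!
With `θ = πν/a` and `r = p/q`, `B_ν(w)` is the constant `(2/a)·sin θ` times `g(a − w)`, where
`g(u) = r^{u/2}·sin(θu)`. Shifting `u` by `∓1` multiplies the power by `r^{∓1/2}`, and
`p·r^{-1/2} = q·r^{1/2} = √(pq)`; so the relation reduces to
`sin(θu − θ) + sin(θu + θ) = 2·sin(θu)·cos θ`.
-/

/-- Spectral coefficient `B_ν(w) = (2/a)·(p/q)^{(a−w)/2}·sin(πν(a−w)/a)·sin(πν/a)`,
with `q = 1 − p`. -/
noncomputable def Bcoef (a : ℕ) (p : ℝ) (ν w : ℕ) : ℝ :=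
  (2 / a) * (p / (1 - p)) ^ (((a : ℝ) - w) / 2) *
    Real.sin (Real.pi * ν * ((a : ℝ) - w) / a) * Real.sin (Real.pi * ν / a)

open Real

noncomputable def geomSine (r θ u : ℝ) : ℝ := r ^ (u / 2) * sin (θ * u)

section

variable {p q : ℝ}

lemma div_sqrt_div_eq_sqrt_mul (hp : 0 < p) (hq : 0 < q) : p / √(p / q) = √(p * q) := by
  have hsp : 0 < √p := sqrt_pos.2 hp
  have hsq : 0 < √q := sqrt_pos.2 hq
  rw [sqrt_div' p hq.le, sqrt_mul hp.le]
  field_simp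
  rw [sq_sqrt hp.le]

lemma mul_sqrt_div_eq_sqrt_mul (hp : 0 < p) (hq : 0 < q) : q * √(p / q) = √(p * q) := by
  have hsq : 0 < √q := sqrt_pos.2 hq
  rw [sqrt_div' p hq.le, sqrt_mul hp.le]
  field_simp
  rw [sq_sqrt hq.le]

lemma mul_rpow_div_sub_one (hp : 0 < p) (hq : 0 < q) (u : ℝ) :
    p * (p / q) ^ ((u - 1) / 2) = √(p * q) * (p / q) ^ (u / 2) := by
  rw [sub_div, rpow_sub (div_pos hp hq), ← sqrt_eq_rpow, ← div_sqrt_div_eq_sqrt_mul hp hq]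
  ring

lemma mul_rpow_div_add_one (hp : 0 < p) (hq : 0 < q) (u : ℝ) :
    q * (p / q) ^ ((u + 1) / 2) = √(p * q) * (p / q) ^ (u / 2) := by
  rw [add_div, rpow_add (div_pos hp hq), ← sqrt_eq_rpow, ← mul_sqrt_div_eq_sqrt_mul hp hq]
  ring

theorem geomSine_recurrence (hp : 0 < p) (hq : 0 < q) (θ u : ℝ) :
    p * geomSine (p / q) θ (u - 1) + q * geomSine (p / q) θ (u + 1) =
      2 * √(p * q) * cos θ * geomSine (p / q) θ u := by
  have hsin : sin (θ * (u - 1)) + sin (θ * (u + 1)) = 2 * sin (θ * u) * cos θ := by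
    rw [two_mul_sin_mul_cos]
    ring_nf
  unfold geomSine
  linear_combination sin (θ * (u - 1)) * mul_rpow_div_sub_one hp hq u
    + sin (θ * (u + 1)) * mul_rpow_div_add_one hp hq u + √(p * q) * (p / q) ^ (u / 2) * hsin

end

lemma Bcoef_eq_geomSine (a : ℕ) (p : ℝ) (ν w : ℕ) :
    Bcoef a p ν w = 2 / a * sin (π * ν / a) * geomSine (p / (1 - p)) (π * ν / a) (a - w) := by
  unfold Bcoef geomSine
  ring_nf

theorem stmt_6_general (a : ℕ) (p : ℝ) (hp : p ∈ Set.Ioo (0 : ℝ) 1) :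
    ∀ ν ∈ Finset.Icc 1 (a - 1), ∀ z ∈ Finset.Icc 1 (a - 1),
      p * Bcoef a p ν (z + 1) + (1 - p) * Bcoef a p ν (z - 1) =
        (2 * Real.sqrt (p * (1 - p)) * Real.cos (Real.pi * ν / a)) * Bcoef a p ν z := by
  intro ν _ z hz
  have hz1 : 1 ≤ z := (Finset.mem_Icc.mp hz).1
  have hq : 0 < 1 - p := sub_pos.2 hp.2
  simp only [Bcoef_eq_geomSine, Nat.cast_add, Nat.cast_sub hz1, Nat.cast_one]
  rw [show (a : ℝ) - (z + 1) = a - z - 1 by ring, show (a : ℝ) - (z - 1) = a - z + 1 by ring]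
  linear_combination 2 / a * sin (π * ν / a) *
    geomSine_recurrence hp.1 hq (π * ν / a) (a - z)

/-- the spectral coefficient `B_ν` satisfies the harmonic-type
relation `p·B_ν(z+1) + q·B_ν(z−1) = λ_ν·B_ν(z)` with
`λ_ν = 2√(pq)·cos(πν/a)`. -/
theorem stmt_6 (a : ℕ) (ha : 2 ≤ a) (p : ℝ) (hp : p ∈ Set.Ioo (0 : ℝ) 1) :
    ∀ ν ∈ Finset.Icc 1 (a - 1), ∀ z ∈ Finset.Icc 1 (a - 1),
      p * Bcoef a p ν (z + 1) + (1 - p) * Bcoef a p ν (z - 1) =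
        (2 * Real.sqrt (p * (1 - p)) * Real.cos (Real.pi * ν / a)) * Bcoef a p ν z :=
  stmt_6_general a p hp
end

section
/- Let N, m ≥ 1 be integers, let Z = {z_1,…,z_m} be a finite set, let σ : Z → Z be an involution (σ∘σ = id), let κ : Z → ℝ_{>0} and K > 0 satisfy κ(z)·κ(σ(z)) = K for all z ∈ Z and κ(z₀) = √K for every fixed point z₀ of σ. Let A, B : {1,…,N} × Z → ℝ satisfy the spectral duality B_ν(z) = κ(z)·A_ν(σ(z)) for all ν ∈ {1,…,N} and z ∈ Z, and let f_ν : (0,1) → ℝ be arbitrary functions. Let π : Z → ℝ_{≥0} be weights satisfying π(z)·√(κ(z)) = π(σ(z))·√(κ(σ(z))) for all z ∈ Z. Then, setting C* = 1/(1 + √K), for every γ ∈ (0,1): Σ_{z∈Z} π(z)·Σ_{ν=1}^{N} A_ν(z)·f_ν(γ) = C*·Σ_{z∈Z} π(z)·Σ_{ν=1}^{N} (A_ν(z) + B_ν(z))·f_ν(γ). In particular, the coupling constant C(π,γ) = ū_π(γ)/s̄_π(γ) equals C* independently of γ, of the choice of π within this family, and of the weights assigned to fixed points of σ. -/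
/-!
The mode sum `a z = ∑ ν, A ν z * f ν γ` is linear in the coefficients and `κ` does not depend on
the mode, so the duality gives `∑ ν, B ν z * f ν γ = κ z * a (σ z)`. Reindexing by the involution
`σ`, the balance condition together with `κ z * κ (σ z) = K` turns `π (σ z) * κ (σ z)` into
`√K * π z`; hence the `B`-part of `s̄_π` is `√K · ū_π` and `s̄_π = (1 + √K) · ū_π`.
-/

open Finset

lemma mul_eq_sqrt_mul_mul_of_mul_sqrt_eq {p q x y : ℝ} (hx : 0 ≤ x) (hy : 0 ≤ y)
    (h : p * √x = q * √y) : q * y = √(x * y) * p :=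
  calc q * y = q * √y * √y := by rw [mul_assoc, Real.mul_self_sqrt hy]
    _ = √(x * y) * p := by rw [← h, Real.sqrt_mul hx]; ring

lemma sum_mul_dual_eq {Z : Type*} [Fintype Z] {σ : Z → Z} (hσ : Function.Involutive σ)
    {π κ : Z → ℝ} {c : ℝ} (hbal : ∀ z, π (σ z) * κ (σ z) = c * π z) (a : Z → ℝ) :
    ∑ z, π z * (κ z * a (σ z)) = c * ∑ z, π z * a z := by
  rw [← Equiv.sum_comp (hσ.toPerm σ), mul_sum]
  refine sum_congr rfl fun z _ => ?_
  rw [Function.Involutive.coe_toPerm, hσ z, ← mul_assoc, hbal z, mul_assoc]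

theorem stmt_14_general (N : ℕ) {Z : Type*} [Fintype Z]
    (σ : Z → Z) (hσ : ∀ z, σ (σ z) = z)
    (κ : Z → ℝ) (hκ : ∀ z, 0 < κ z) (K : ℝ)
    (hκK : ∀ z, κ z * κ (σ z) = K)
    (A B : Fin N → Z → ℝ)
    (hdual : ∀ ν z, B ν z = κ z * A ν (σ z))
    (f : Fin N → ℝ → ℝ)
    (π : Z → ℝ)
    (hbal : ∀ z, π z * Real.sqrt (κ z) = π (σ z) * Real.sqrt (κ (σ z))) :
    ∀ γ ∈ Set.Ioo (0 : ℝ) 1,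
      ∑ z, π z * ∑ ν, A ν z * f ν γ =
        (1 / (1 + Real.sqrt K)) * ∑ z, π z * ∑ ν, (A ν z + B ν z) * f ν γ := by
  intro γ _
  set a : Z → ℝ := fun z => ∑ ν, A ν z * f ν γ
  have hmode : ∀ z, ∑ ν, B ν z * f ν γ = κ z * a (σ z) := fun z => by
    simp only [a, hdual, mul_sum, mul_assoc]
  have hweight : ∀ z, π (σ z) * κ (σ z) = √K * π z := fun z => by
    rw [← hκK z]
    exact mul_eq_sqrt_mul_mul_of_mul_sqrt_eq (hκ z).le (hκ (σ z)).le (hbal z)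
  have hsplit : ∑ z, π z * ∑ ν, (A ν z + B ν z) * f ν γ =
      ∑ z, π z * a z + ∑ z, π z * (κ z * a (σ z)) := by
    simp only [add_mul, sum_add_distrib, mul_add, hmode, a]
  rw [hsplit, sum_mul_dual_eq hσ hweight]
  have : 0 < 1 + √K := by positivity
  field_simp
  ring

/-- abstract invariance principle. Given a spectral duality
`B_ν(z) = κ(z)·A_ν(σ(z))` with involution `σ`, mode-independent weights `κ`
with `κ(z)·κ(σ(z)) = K` and `κ(z₀) = √K` at fixed points, any nonnegative
weights `π` balanced along `σ` (`π(z)√κ(z) = π(σ(z))√κ(σ(z))`) satisfy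
`ū_π(γ) = C*·s̄_π(γ)` with `C* = 1/(1+√K)`, for every `γ ∈ (0,1)` and any
transfer functions `f_ν`. -/
theorem stmt_14 (N : ℕ) (hN : 1 ≤ N) {Z : Type*} [Fintype Z] [Nonempty Z]
    (σ : Z → Z) (hσ : ∀ z, σ (σ z) = z)
    (κ : Z → ℝ) (hκ : ∀ z, 0 < κ z) (K : ℝ) (hK : 0 < K)
    (hκK : ∀ z, κ z * κ (σ z) = K)
    (hfix : ∀ z, σ z = z → κ z = Real.sqrt K)
    (A B : Fin N → Z → ℝ)
    (hdual : ∀ ν z, B ν z = κ z * A ν (σ z))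
    (f : Fin N → ℝ → ℝ)
    (π : Z → ℝ) (hπ : ∀ z, 0 ≤ π z)
    (hbal : ∀ z, π z * Real.sqrt (κ z) = π (σ z) * Real.sqrt (κ (σ z))) :
    ∀ γ ∈ Set.Ioo (0 : ℝ) 1,
      ∑ z, π z * ∑ ν, A ν z * f ν γ =
        (1 / (1 + Real.sqrt K)) * ∑ z, π z * ∑ ν, (A ν z + B ν z) * f ν γ :=
  stmt_14_general N σ hσ κ hκ K hκK A B hdual f π hbal
end
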